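/- Let ω = ⊕_i p(i) ω_i be a block-diagonal density matrix on ⊕_i (ℂ^{n_i} ⊗ ℂ^{n_i}) where ω_i = |σ_i^{1/2}⟩⟨σ_i^{1/2}| is the rank-one projector onto the vectorization of σ_i^{1/2}, σ_i a density matrix on ℂ^{n_i}, and p a probability distribution. Then the entangled entropy E = Tr ω log( ω^{1/2} (ρ ⊗ I)⁻ ω^{1/2} ) with ρ = ⊕_i p(i)σ_i satisfies E = Σ_i p(i) log(rank σ_i). -/

import Mathlib

open Matrix Kronecker
open scoped ComplexOrder

noncomputable section
open Classical

/-- Hermitian functional calculus, extended by junk value `0` to non-Hermitian matrices. -/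
def matCFC {d : Type*} [Fintype d] [DecidableEq d] (f : ℝ → ℝ)
    (A : Matrix d d ℂ) : Matrix d d ℂ :=
  if h : A.IsHermitian then h.cfc f else 0

/-- Matrix logarithm (spectral, with `Real.log 0 = 0` on the kernel). -/
def matLog {d : Type*} [Fintype d] [DecidableEq d] (A : Matrix d d ℂ) : Matrix d d ℂ :=
  matCFC Real.log A

/-- Moore–Penrose pseudoinverse of a Hermitian matrix (junk value `0` otherwise). -/
def matPinv {d : Type*} [Fintype d] [DecidableEq d] (A : Matrix d d ℂ) : Matrix d d ℂ :=
  matCFC (·⁻¹) A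

/-- Positive square root of a positive semidefinite matrix (junk value `0` otherwise). -/
def matSqrt {d : Type*} [Fintype d] [DecidableEq d] (A : Matrix d d ℂ) : Matrix d d ℂ :=
  if h : A.PosSemidef then
    (h.1.eigenvectorUnitary : Matrix d d ℂ) * diagonal ((↑) ∘ (√·) ∘ h.1.eigenvalues) *
      (star h.1.eigenvectorUnitary : Matrix d d ℂ)
  else 0

/-- von Neumann entropy `-∑ λᵢ log λᵢ` (junk value `0` for non-Hermitian matrices). -/
def vN {d : Type*} [Fintype d] [DecidableEq d] (A : Matrix d d ℂ) : ℝ :=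
  if h : A.IsHermitian then -∑ i, (h.eigenvalues i) * Real.log (h.eigenvalues i) else 0

/-- Belavkin–Staszewski relative entropy `Tr ω log(ω^{1/2} φ⁻ ω^{1/2})`. -/
def RBS {d : Type*} [Fintype d] [DecidableEq d] (ω φ : Matrix d d ℂ) : ℝ :=
  ((ω * matLog (matSqrt ω * matPinv φ * matSqrt ω)).trace).re

/-- Partial trace over the second tensor factor. -/
def ptraceR {m n : Type*} [Fintype m] [Fintype n]
    (M : Matrix (m × n) (m × n) ℂ) : Matrix m m ℂ :=
  Matrix.of fun i j => ∑ k, M (i, k) (j, k)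

/-- Partial trace over the first tensor factor. -/
def ptraceL {m n : Type*} [Fintype m] [Fintype n]
    (M : Matrix (m × n) (m × n) ℂ) : Matrix n n ℂ :=
  Matrix.of fun k l => ∑ i, M (i, k) (i, l)


/-!
Everything in the formula is block diagonal, and the functional calculus commutes with
`blockDiagonal'` and with `· ⊗ₖ 1`, so the computation splits into blocks. On block `i`,
`ω_i = p_i P_i` with `P_i = |σ_i^{1/2}⟩⟨σ_i^{1/2}|` a rank-one projection, hence
`ω_i^{1/2} = √p_i P_i`, while `(p_i σ_i ⊗ 1)⁻ = p_i⁻¹ (σ_i⁻ ⊗ 1)`. The key identity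
`P (X ⊗ 1) P = Tr (X σ) P` turns the middle operator into `Tr (σ_i⁻ σ_i) P_i = rank σ_i • P_i`
(for `p_i ≠ 0`), whose logarithm is `log (rank σ_i) • P_i`; finally `Tr (ω_i P_i) = p_i`.
-/

open Polynomial in
theorem Set.Finite.exists_polynomial_eqOn {K : Type*} [Field K] {s : Set K} (hs : s.Finite)
    (f : K → K) : ∃ q : K[X], s.EqOn f q.eval :=
  ⟨Lagrange.interpolate hs.toFinset id f, fun _ hx =>
    (Lagrange.eval_interpolate_at_node f (Set.injOn_id _) (hs.mem_toFinset.2 hx)).symm⟩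

open Polynomial in
theorem cfc_eq_aeval_of_eqOn {R A : Type*} {p : A → Prop} [CommSemiring R] [StarRing R]
    [MetricSpace R] [IsTopologicalSemiring R] [ContinuousStar R] [TopologicalSpace A] [Ring A]
    [StarRing A] [Algebra R A] [ContinuousFunctionalCalculus R A p] {f : R → R} {a : A}
    {q : R[X]} (hq : (spectrum R a).EqOn f q.eval) (ha : p a) : cfc f a = aeval a q :=
  (cfc_congr hq).trans (cfc_polynomial q a ha)

theorem IsIdempotentElem.cfc_smul {A : Type*} [Ring A] [StarRing A] [Algebra ℝ A]
    [TopologicalSpace A] [ContinuousFunctionalCalculus ℝ A IsSelfAdjoint]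
    [ContinuousMap.UniqueHom ℝ A] {P : A}
    (hP : IsIdempotentElem P) (hPs : IsSelfAdjoint P) {f : ℝ → ℝ} (hf : f 0 = 0) (r : ℝ) :
    cfc f (r • P) = f r • P := by
  have hspec : spectrum ℝ P ⊆ {0, 1} := hP.spectrum_subset ℝ
  have hfin : (spectrum ℝ P).Finite := (Set.toFinite _).subset hspec
  rw [← cfc_comp_smul r f P ((hfin.image _).continuousOn f), ← cfc_const_mul_id (f r) P]
  refine cfc_congr fun x hx => ?_
  rcases hspec hx with rfl | rfl <;> simp [hf]

namespace Matrix

section Hermitian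

variable {d : Type*} [Fintype d] [DecidableEq d]

theorem continuousOn_spectrum_real (f : ℝ → ℝ) (A : Matrix d d ℂ) :
    ContinuousOn f (spectrum ℝ A) :=
  finite_real_spectrum.continuousOn f

theorem matCFC_eq_cfc (f : ℝ → ℝ) (A : Matrix d d ℂ) : matCFC f A = cfc f A := by
  unfold matCFC
  split_ifs with hA
  · exact (hA.cfc_eq f).symm
  · exact (cfc_apply_of_not_predicate A hA).symm

theorem matSqrt_eq_cfc {A : Matrix d d ℂ} (hA : A.PosSemidef) : matSqrt A = cfc Real.sqrt A := by
  rw [hA.1.cfc_eq, matSqrt, dif_pos hA]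
  rfl

theorem isHermitian_matSqrt {A : Matrix d d ℂ} (hA : A.PosSemidef) : (matSqrt A).IsHermitian := by
  rw [matSqrt_eq_cfc hA]
  exact cfc_predicate _ A

theorem matSqrt_mul_self {A : Matrix d d ℂ} (hA : A.PosSemidef) : matSqrt A * matSqrt A = A := by
  rw [matSqrt_eq_cfc hA, ← cfc_mul _ _ A (continuousOn_spectrum_real _ A)
    (continuousOn_spectrum_real _ A)]
  conv_rhs => rw [← cfc_id' ℝ A hA.1.isSelfAdjoint]
  refine cfc_congr fun x hx => Real.mul_self_sqrt ?_
  obtain ⟨i, rfl⟩ := hA.1.spectrum_real_eq_range_eigenvalues ▸ hx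
  exact hA.eigenvalues_nonneg i

theorem IsHermitian.trace_cfc {A : Matrix d d ℂ} (hA : A.IsHermitian) (f : ℝ → ℝ) :
    (cfc f A).trace = ∑ i, (f (hA.eigenvalues i) : ℂ) := by
  rw [hA.cfc_eq, IsHermitian.cfc, Unitary.conjStarAlgAut_apply, trace_mul_cycle,
    Unitary.star_mul_self_of_mem (SetLike.coe_mem _), one_mul, trace_diagonal]
  rfl

theorem IsHermitian.trace_cfc_inv_mul_self {A : Matrix d d ℂ} (hA : A.IsHermitian) :
    (cfc (·⁻¹ : ℝ → ℝ) A * A).trace = A.rank := by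
  have hmul := cfc_mul (·⁻¹ : ℝ → ℝ) (fun x => x) A (continuousOn_spectrum_real _ A)
    (continuousOn_spectrum_real _ A)
  rw [cfc_id' ℝ A hA.isSelfAdjoint] at hmul
  rw [← hmul, hA.trace_cfc, hA.rank_eq_card_non_zero_eigs, Fintype.card_subtype,
    Finset.card_eq_sum_ones, Nat.cast_sum, Finset.sum_filter]
  refine Finset.sum_congr rfl fun i _ => ?_
  by_cases h : hA.eigenvalues i = 0 <;> simp [h]

theorem cfc_inv_smul {A : Matrix d d ℂ} (hA : A.IsHermitian) (r : ℝ) :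
    cfc (·⁻¹ : ℝ → ℝ) (r • A) = r⁻¹ • cfc (·⁻¹ : ℝ → ℝ) A := by
  rw [← cfc_comp_smul r _ A ((finite_real_spectrum.image _).continuousOn _) hA.isSelfAdjoint,
    ← cfc_const_mul _ _ A (continuousOn_spectrum_real _ A)]
  simp only [smul_eq_mul, mul_inv]

end Hermitian

section BlockDiagonal

variable {ι : Type*} [Fintype ι] [DecidableEq ι] {m : ι → Type*} [∀ i, Fintype (m i)]
  [∀ i, DecidableEq (m i)]

variable (m) in
def blockDiagonal'AlgHom (R α : Type*) [CommSemiring R] [Semiring α] [Algebra R α] :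
    (∀ i, Matrix (m i) (m i) α) →ₐ[R] Matrix (Σ i, m i) (Σ i, m i) α where
  toFun := blockDiagonal'
  map_one' := blockDiagonal'_one
  map_mul' M N := blockDiagonal'_mul M N
  map_zero' := blockDiagonal'_zero
  map_add' M N := blockDiagonal'_add M N
  commutes' r := by
    simp [Algebra.algebraMap_eq_smul_one, blockDiagonal'_smul]

-- There is no functional calculus on the product algebra, so `f` is replaced by a polynomial
-- interpolating it on all the (finite) spectra involved.
open Polynomial in
theorem cfc_blockDiagonal' (f : ℝ → ℝ) (M : ∀ i, Matrix (m i) (m i) ℂ)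
    (hM : ∀ i, (M i).IsHermitian) :
    cfc f (blockDiagonal' M) = blockDiagonal' fun i => cfc f (M i) := by
  have hfin : (spectrum ℝ (blockDiagonal' M) ∪ ⋃ i, spectrum ℝ (M i)).Finite :=
    finite_real_spectrum.union (Set.finite_iUnion fun _ => finite_real_spectrum)
  obtain ⟨q, hq⟩ := hfin.exists_polynomial_eqOn f
  have hBD : (blockDiagonal' M).IsHermitian := isHermitian_blockDiagonal'_iff.2 hM
  rw [cfc_eq_aeval_of_eqOn (hq.mono Set.subset_union_left) hBD.isSelfAdjoint]
  have hblocks : aeval M q = fun i => cfc f (M i) := by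
    rw [aeval_pi_apply]
    funext i
    have hsub : spectrum ℝ (M i) ⊆ spectrum ℝ (blockDiagonal' M) ∪ ⋃ j, spectrum ℝ (M j) :=
      Set.subset_union_of_subset_right (Set.subset_iUnion (fun j => spectrum ℝ (M j)) i) _
    exact (cfc_eq_aeval_of_eqOn (hq.mono hsub) (hM i).isSelfAdjoint).symm
  exact (aeval_algHom_apply (blockDiagonal'AlgHom m ℝ ℂ) M q).trans (congrArg _ hblocks)

theorem PosSemidef.blockDiagonal' {M : ∀ i, Matrix (m i) (m i) ℂ}
    (hM : ∀ i, (M i).PosSemidef) : (blockDiagonal' M).PosSemidef := by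
  refine posSemidef_iff_isHermitian_and_spectrum_nonneg.2
    ⟨isHermitian_blockDiagonal'_iff.2 fun i => (hM i).1, fun x hx => ?_⟩
  have hx' := AlgHom.spectrum_apply_subset (blockDiagonal'AlgHom m ℂ ℂ) M hx
  rw [Pi.spectrum_eq, Set.mem_iUnion] at hx'
  obtain ⟨i, hi⟩ := hx'
  exact (posSemidef_iff_isHermitian_and_spectrum_nonneg.1 (hM i)).2 hi

end BlockDiagonal

section Kronecker

variable {d e : Type*} [Fintype d] [DecidableEq d] [Fintype e] [DecidableEq e]

variable (d e) in
def kroneckerOneStarAlgHom (R α : Type*) [CommSemiring R] [CommSemiring α] [StarRing α]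
    [Algebra R α] : Matrix d d α →⋆ₐ[R] Matrix (d × e) (d × e) α where
  toFun A := A ⊗ₖ 1
  map_one' := one_kronecker_one
  map_mul' A B := by rw [← mul_kronecker_mul, one_mul]
  map_zero' := zero_kronecker _
  map_add' A B := add_kronecker A B 1
  commutes' r := by
    simp [Algebra.algebraMap_eq_smul_one, smul_kronecker]
  map_star' A := by
    simp [star_eq_conjTranspose, conjTranspose_kronecker]

theorem cfc_kronecker_one (f : ℝ → ℝ) {A : Matrix d d ℂ} (hA : A.IsHermitian) :
    cfc f (A ⊗ₖ (1 : Matrix e e ℂ)) = cfc f A ⊗ₖ 1 :=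
  ((kroneckerOneStarAlgHom d e ℝ ℂ).map_cfc f A (continuousOn_spectrum_real f A)
    (kroneckerOneStarAlgHom d e ℝ ℂ).toAlgHom.toLinearMap.continuous_of_finiteDimensional
    hA.isSelfAdjoint (hA.isSelfAdjoint.map _)).symm

end Kronecker

theorem vecMulVec_mul_mul_vecMulVec {n α : Type*} [Fintype n] [CommSemiring α] (v w : n → α)
    (M : Matrix n n α) :
    vecMulVec v w * M * vecMulVec v w = (w ⬝ᵥ (M *ᵥ v)) • vecMulVec v w := by
  rw [vecMulVec_mul, vecMulVec_mul_vecMulVec, vecMulVec_smul, ← dotProduct_mulVec]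

section Purification

variable {d : Type*} [Fintype d] [DecidableEq d]

theorem star_vec_transpose_dotProduct_kronecker_one_mulVec (B X : Matrix d d ℂ) :
    star (vec Bᵀ) ⬝ᵥ ((X ⊗ₖ (1 : Matrix d d ℂ)) *ᵥ vec Bᵀ) = (X * B * Bᴴ).trace := by
  rw [kronecker_mulVec_vec, star_vec_dotProduct_vec, ← trace_transpose]
  simp [transpose_mul, Matrix.mul_assoc, conjTranspose_transpose_eq_transpose_conjTranspose]

-- `vec` stacks columns, so `vec Bᵀ (j, k) = B j k`: this is the paper's vector `|σ^{1/2}⟩`.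
def canonicalPurification (σ : Matrix d d ℂ) : Matrix (d × d) (d × d) ℂ :=
  vecMulVec (vec (matSqrt σ)ᵀ) (star (vec (matSqrt σ)ᵀ))

theorem posSemidef_canonicalPurification (σ : Matrix d d ℂ) :
    (canonicalPurification σ).PosSemidef :=
  posSemidef_vecMulVec_self_star _

variable {σ : Matrix d d ℂ}

theorem star_vec_matSqrt_dotProduct_kronecker_one_mulVec (hσ : σ.PosSemidef)
    (X : Matrix d d ℂ) :
    star (vec (matSqrt σ)ᵀ) ⬝ᵥ ((X ⊗ₖ (1 : Matrix d d ℂ)) *ᵥ vec (matSqrt σ)ᵀ) =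
      (X * σ).trace := by
  rw [star_vec_transpose_dotProduct_kronecker_one_mulVec, (isHermitian_matSqrt hσ).eq,
    Matrix.mul_assoc, matSqrt_mul_self hσ]

theorem canonicalPurification_mul_kronecker_one_mul (hσ : σ.PosSemidef) (X : Matrix d d ℂ) :
    canonicalPurification σ * (X ⊗ₖ 1) * canonicalPurification σ =
      (X * σ).trace • canonicalPurification σ := by
  rw [canonicalPurification, vecMulVec_mul_mul_vecMulVec,
    star_vec_matSqrt_dotProduct_kronecker_one_mulVec hσ]

theorem isIdempotentElem_canonicalPurification (hσ : σ.PosSemidef) (htr : σ.trace = 1) :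
    IsIdempotentElem (canonicalPurification σ) := by
  simpa [IsIdempotentElem, one_kronecker_one, htr] using
    canonicalPurification_mul_kronecker_one_mul hσ 1

theorem trace_canonicalPurification (hσ : σ.PosSemidef) :
    (canonicalPurification σ).trace = σ.trace := by
  have h := star_vec_matSqrt_dotProduct_kronecker_one_mulVec hσ 1
  rw [one_kronecker_one, one_mulVec, Matrix.one_mul] at h
  rw [canonicalPurification, trace_vecMulVec, dotProduct_comm, h]

-- `p * p⁻¹` is `1`, or `0` when `p = 0`: then `0⁻¹ = 0` matches the pseudoinverse.
theorem canonicalPurification_mul_pinv_mul (hσ : σ.PosSemidef) {p : ℝ} (hp : 0 ≤ p) :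
    (√p • canonicalPurification σ) * (p⁻¹ • (cfc (·⁻¹ : ℝ → ℝ) σ ⊗ₖ (1 : Matrix d d ℂ))) *
        (√p • canonicalPurification σ) =
      (p * p⁻¹ * σ.rank) • canonicalPurification σ := by
  rw [smul_mul_smul_comm, smul_mul_smul_comm, canonicalPurification_mul_kronecker_one_mul hσ,
    hσ.1.trace_cfc_inv_mul_self, mul_right_comm √p, Real.mul_self_sqrt hp]
  module

theorem trace_smul_canonicalPurification_mul_smul (hσ : σ.PosSemidef) (htr : σ.trace = 1)
    (a b : ℝ) :
    ((a • canonicalPurification σ) * (b • canonicalPurification σ)).trace = (a * b : ℝ) := by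
  rw [smul_mul_smul_comm, (isIdempotentElem_canonicalPurification hσ htr).eq, trace_smul,
    trace_canonicalPurification hσ, htr, Complex.real_smul, mul_one]

end Purification

section BlockPurification

variable {ι : Type*} [Fintype ι] [DecidableEq ι] {n : ι → Type*} [∀ i, Fintype (n i)]
  [∀ i, DecidableEq (n i)] {σ : ∀ i, Matrix (n i) (n i) ℂ}

theorem cfc_blockDiagonal'_smul_canonicalPurification (hσ : ∀ i, (σ i).PosSemidef)
    (htr : ∀ i, (σ i).trace = 1) {f : ℝ → ℝ} (hf : f 0 = 0) (c : ι → ℝ) :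
    cfc f (blockDiagonal' fun i => c i • canonicalPurification (σ i)) =
      blockDiagonal' fun i => f (c i) • canonicalPurification (σ i) := by
  rw [cfc_blockDiagonal' f _ fun i =>
    (posSemidef_canonicalPurification (σ i)).1.smul (IsSelfAdjoint.all _)]
  exact congrArg _ (funext fun i =>
    (isIdempotentElem_canonicalPurification (hσ i) (htr i)).cfc_smul
      (posSemidef_canonicalPurification (σ i)).1.isSelfAdjoint hf (c i))

theorem matSqrt_blockDiagonal'_smul_canonicalPurification (hσ : ∀ i, (σ i).PosSemidef)
    (htr : ∀ i, (σ i).trace = 1) {p : ι → ℝ} (hp : ∀ i, 0 ≤ p i) :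
    matSqrt (blockDiagonal' fun i => p i • canonicalPurification (σ i)) =
      blockDiagonal' fun i => √(p i) • canonicalPurification (σ i) := by
  rw [matSqrt_eq_cfc (PosSemidef.blockDiagonal' fun i =>
      (posSemidef_canonicalPurification _).smul (hp i)),
    cfc_blockDiagonal'_smul_canonicalPurification hσ htr Real.sqrt_zero]

theorem matPinv_blockDiagonal'_smul_kronecker_one (hσ : ∀ i, (σ i).IsHermitian) (p : ι → ℝ) :
    matPinv (blockDiagonal' fun i => (p i : ℂ) • (σ i ⊗ₖ (1 : Matrix (n i) (n i) ℂ))) =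
      blockDiagonal' fun i =>
        (p i)⁻¹ • (cfc (·⁻¹ : ℝ → ℝ) (σ i) ⊗ₖ (1 : Matrix (n i) (n i) ℂ)) := by
  have hkron : ∀ i, (σ i ⊗ₖ (1 : Matrix (n i) (n i) ℂ)).IsHermitian := fun i =>
    (hσ i).isSelfAdjoint.map (kroneckerOneStarAlgHom _ _ ℝ ℂ)
  change matPinv (blockDiagonal' fun i => p i • (σ i ⊗ₖ (1 : Matrix (n i) (n i) ℂ))) = _
  rw [matPinv, matCFC_eq_cfc, cfc_blockDiagonal' _ _ fun i => (hkron i).smul (IsSelfAdjoint.all _)]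
  exact congrArg _ (funext fun i => by rw [cfc_inv_smul (hkron i), cfc_kronecker_one _ (hσ i)])

end BlockPurification

end Matrix

theorem stmt9_general {ι : Type*} [Fintype ι] [DecidableEq ι] (n : ι → ℕ)
    (p : ι → ℝ) (hp : ∀ i, 0 ≤ p i)
    (σ : ∀ i, Matrix (Fin (n i)) (Fin (n i)) ℂ)
    (hσ : ∀ i, (σ i).PosSemidef) (hσtr : ∀ i, (σ i).trace = 1) :
    RBS
      (Matrix.blockDiagonal' fun i =>
        Matrix.of fun ab cd : Fin (n i) × Fin (n i) =>
          (p i : ℂ) * (matSqrt (σ i) ab.1 ab.2 * star (matSqrt (σ i) cd.1 cd.2)))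
      (Matrix.blockDiagonal' fun i =>
        (p i : ℂ) • (σ i ⊗ₖ (1 : Matrix (Fin (n i)) (Fin (n i)) ℂ))) =
    ∑ i, p i * Real.log ((σ i).rank) := by
  have hω : (blockDiagonal' fun i => of fun ab cd : Fin (n i) × Fin (n i) =>
      (p i : ℂ) * (matSqrt (σ i) ab.1 ab.2 * star (matSqrt (σ i) cd.1 cd.2))) =
      blockDiagonal' fun i => p i • canonicalPurification (σ i) := rfl
  rw [RBS, hω, matSqrt_blockDiagonal'_smul_canonicalPurification hσ hσtr hp,
    matPinv_blockDiagonal'_smul_kronecker_one (fun i => (hσ i).1), ← blockDiagonal'_mul,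
    ← blockDiagonal'_mul]
  simp only [canonicalPurification_mul_pinv_mul (hσ _) (hp _)]
  rw [matLog, matCFC_eq_cfc, cfc_blockDiagonal'_smul_canonicalPurification hσ hσtr Real.log_zero,
    ← blockDiagonal'_mul, trace_blockDiagonal']
  simp only [trace_smul_canonicalPurification_mul_smul (hσ _) (hσtr _)]
  rw [← Complex.ofReal_sum, Complex.ofReal_re]
  refine Finset.sum_congr rfl fun i _ => ?_
  rcases eq_or_ne (p i) 0 with h | h <;> simp [h]

theorem stmt9 {ι : Type*} [Fintype ι] [DecidableEq ι] (n : ι → ℕ)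
    (p : ι → ℝ) (hp : ∀ i, 0 ≤ p i) (hp1 : ∑ i, p i = 1)
    (σ : ∀ i, Matrix (Fin (n i)) (Fin (n i)) ℂ)
    (hσ : ∀ i, (σ i).PosSemidef) (hσtr : ∀ i, (σ i).trace = 1) :
    RBS
      (Matrix.blockDiagonal' fun i =>
        Matrix.of fun ab cd : Fin (n i) × Fin (n i) =>
          (p i : ℂ) * (matSqrt (σ i) ab.1 ab.2 * star (matSqrt (σ i) cd.1 cd.2)))
      (Matrix.blockDiagonal' fun i =>
        (p i : ℂ) • (σ i ⊗ₖ (1 : Matrix (Fin (n i)) (Fin (n i)) ℂ))) =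
    ∑ i, p i * Real.log ((σ i).rank) :=
  stmt9_general n p hp σ hσ hσtr
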